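/- Let g : ℝ^{d1} × ℝ^{d2} → ℝ be differentiable with l̄-Lipschitz gradients. Fix x, m ∈ ℝ^{d1}, y, n ∈ ℝ^{d2}, α > 0, β > 0, and set x⁺ = x − αm, y⁺ = y + βn. Then g(x⁺, y⁺) ≥ g(x,y) + (β/2)‖∇_y g(x⁺, y)‖² − (α/2)‖∇_x g(x,y)‖² − (β/2)‖∇_y g(x⁺, y) − n‖² + (α/2)‖∇_x g(x,y) − m‖² + (β/2)(1 − l̄β)‖n‖² − (α/2)(1 + αl̄)‖m‖². -/

import Mathlib

/-!
Both steps are instances of the descent lemma `f (a + v) ≥ f a + ⟪∇f a, v⟫ - L/2 ‖v‖²` for a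
function with `L`-Lipschitz gradient: once in `x` at fixed `y`, once in `y` at fixed `x⁺`.
Expanding `‖∇f a - v‖²` turns the inner products into the squared norms of the statement.
-/

open scoped RealInnerProductSpace

/-- Gradient of `g` with respect to the first block of variables. -/
noncomputable def gradx {d1 d2 : ℕ}
    (g : EuclideanSpace ℝ (Fin d1) → EuclideanSpace ℝ (Fin d2) → ℝ)
    (x : EuclideanSpace ℝ (Fin d1)) (y : EuclideanSpace ℝ (Fin d2)) :
    EuclideanSpace ℝ (Fin d1) :=
  gradient (fun x' => g x' y) x

/-- Gradient of `g` with respect to the second block of variables. -/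
noncomputable def grady {d1 d2 : ℕ}
    (g : EuclideanSpace ℝ (Fin d1) → EuclideanSpace ℝ (Fin d2) → ℝ)
    (x : EuclideanSpace ℝ (Fin d1)) (y : EuclideanSpace ℝ (Fin d2)) :
    EuclideanSpace ℝ (Fin d2) :=
  gradient (fun y' => g x y') y

section LipschitzGradient

variable {E : Type*} [NormedAddCommGroup E] [InnerProductSpace ℝ E] [CompleteSpace E]
  {f : E → ℝ} {L : ℝ}

theorem apply_add_ge_of_lipschitz_gradient (hf : Differentiable ℝ f)
    (hlip : ∀ p q, ‖gradient f p - gradient f q‖ ≤ L * ‖p - q‖) (a v : E) :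
    f a + ⟪gradient f a, v⟫ - L / 2 * ‖v‖ ^ 2 ≤ f (a + v) := by
  -- The Lipschitz bound makes `φ' ≥ 0` on `[0, ∞)`, so `φ 0 ≤ φ 1`.
  set φ : ℝ → ℝ := fun t => f (a + t • v) - t * ⟪gradient f a, v⟫ + L / 2 * t ^ 2 * ‖v‖ ^ 2
  have hφ : ∀ t, HasDerivAt φ
      (⟪gradient f (a + t • v) - gradient f a, v⟫ + L * t * ‖v‖ ^ 2) t := by
    intro t
    have hline : HasDerivAt (fun s : ℝ => a + s • v) v t := by
      simpa using ((hasDerivAt_id t).smul_const v).const_add a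
    have hfline : HasDerivAt (fun s : ℝ => f (a + s • v)) ⟪gradient f (a + t • v), v⟫ t := by
      simpa [Function.comp_def] using
        (hf (a + t • v)).hasGradientAt.hasFDerivAt.comp_hasDerivAt t hline
    refine ((hfline.sub ((hasDerivAt_id t).mul_const ⟪gradient f a, v⟫)).add
      (((hasDerivAt_pow 2 t).const_mul (L / 2)).mul_const (‖v‖ ^ 2))).congr_deriv ?_
    simp only [inner_sub_left]
    ring
  have hmono : MonotoneOn φ (Set.Ici 0) := by
    refine monotoneOn_of_hasDerivWithinAt_nonneg (convex_Ici 0)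
      (fun t _ => (hφ t).continuousAt.continuousWithinAt)
      (fun t _ => (hφ t).hasDerivWithinAt) fun t ht => ?_
    rw [interior_Ici, Set.mem_Ioi] at ht
    have hinner : -⟪gradient f (a + t • v) - gradient f a, v⟫ ≤ L * t * ‖v‖ ^ 2 :=
      calc -⟪gradient f (a + t • v) - gradient f a, v⟫
          ≤ ‖gradient f (a + t • v) - gradient f a‖ * ‖v‖ := by
            rw [← inner_neg_left]; exact (real_inner_le_norm _ _).trans (by rw [norm_neg])
        _ ≤ L * ‖t • v‖ * ‖v‖ := by gcongr; simpa using hlip (a + t • v) a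
        _ = L * t * ‖v‖ ^ 2 := by rw [norm_smul, Real.norm_of_nonneg ht.le]; ring
    linarith
  have hφ01 := hmono Set.self_mem_Ici (Set.mem_Ici.2 zero_le_one) zero_le_one
  simp only [φ, zero_smul, add_zero, one_smul, zero_mul, sub_zero, one_mul] at hφ01
  linarith

theorem apply_add_smul_ge_of_lipschitz_gradient (hf : Differentiable ℝ f)
    (hlip : ∀ p q, ‖gradient f p - gradient f q‖ ≤ L * ‖p - q‖) (a v : E) (t : ℝ) :
    f a + t / 2 * ‖gradient f a‖ ^ 2 - t / 2 * ‖gradient f a - v‖ ^ 2 +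
      t / 2 * (1 - L * t) * ‖v‖ ^ 2 ≤ f (a + t • v) := by
  have h := apply_add_ge_of_lipschitz_gradient hf hlip a (t • v)
  rw [real_inner_smul_right, norm_smul, Real.norm_eq_abs, mul_pow, sq_abs] at h
  linear_combination h - t / 2 * norm_sub_sq_real (gradient f a) v

end LipschitzGradient

theorem alternating_step_inequality_general {d1 d2 : ℕ}
    (g : EuclideanSpace ℝ (Fin d1) → EuclideanSpace ℝ (Fin d2) → ℝ) (lb : ℝ)
    (hdiff : Differentiable ℝ (fun p : EuclideanSpace ℝ (Fin d1) × EuclideanSpace ℝ (Fin d2) =>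
      g p.1 p.2))
    (hlipx : ∀ x1 y1 x2 y2, ‖gradx g x1 y1 - gradx g x2 y2‖ ≤ lb * (‖x1 - x2‖ + ‖y1 - y2‖))
    (hlipy : ∀ x1 y1 x2 y2, ‖grady g x1 y1 - grady g x2 y2‖ ≤ lb * (‖x1 - x2‖ + ‖y1 - y2‖))
    (x m : EuclideanSpace ℝ (Fin d1)) (y n : EuclideanSpace ℝ (Fin d2)) (α β : ℝ) :
    g (x - α • m) (y + β • n) ≥
      g x y + β / 2 * ‖grady g (x - α • m) y‖ ^ 2 - α / 2 * ‖gradx g x y‖ ^ 2 -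
        β / 2 * ‖grady g (x - α • m) y - n‖ ^ 2 + α / 2 * ‖gradx g x y - m‖ ^ 2 +
        β / 2 * (1 - lb * β) * ‖n‖ ^ 2 - α / 2 * (1 + α * lb) * ‖m‖ ^ 2 := by
  have hdx : Differentiable ℝ (fun x' => g x' y) :=
    hdiff.comp (differentiable_id.prodMk (differentiable_const y))
  have hdy : Differentiable ℝ (fun y' => g (x - α • m) y') :=
    hdiff.comp ((differentiable_const (x - α • m)).prodMk differentiable_id)
  -- the descent step in `x` is an ascent step with step size `-α`
  have hdescent : g x y + -α / 2 * ‖gradx g x y‖ ^ 2 - -α / 2 * ‖gradx g x y - m‖ ^ 2 +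
      -α / 2 * (1 - lb * -α) * ‖m‖ ^ 2 ≤ g (x - α • m) y := by
    have := apply_add_smul_ge_of_lipschitz_gradient hdx
      (fun p q => by simpa [gradx] using hlipx p y q y) x m (-α)
    rwa [neg_smul, ← sub_eq_add_neg] at this
  have hascent : g (x - α • m) y + β / 2 * ‖grady g (x - α • m) y‖ ^ 2 -
      β / 2 * ‖grady g (x - α • m) y - n‖ ^ 2 + β / 2 * (1 - lb * β) * ‖n‖ ^ 2 ≤
      g (x - α • m) (y + β • n) :=
    apply_add_smul_ge_of_lipschitz_gradient hdy
      (fun p q => by simpa [grady] using hlipy (x - α • m) p (x - α • m) q) y n β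
  linarith

/-- One-iteration inequality for an alternating inexact descent-ascent step
`x⁺ = x − αm`, `y⁺ = y + βn`, for `g` with `l̄`-Lipschitz gradients. -/
theorem alternating_step_inequality {d1 d2 : ℕ}
    (g : EuclideanSpace ℝ (Fin d1) → EuclideanSpace ℝ (Fin d2) → ℝ) (lb : ℝ)
    (hdiff : Differentiable ℝ (fun p : EuclideanSpace ℝ (Fin d1) × EuclideanSpace ℝ (Fin d2) =>
      g p.1 p.2))
    (hlipx : ∀ x1 y1 x2 y2, ‖gradx g x1 y1 - gradx g x2 y2‖ ≤ lb * (‖x1 - x2‖ + ‖y1 - y2‖))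
    (hlipy : ∀ x1 y1 x2 y2, ‖grady g x1 y1 - grady g x2 y2‖ ≤ lb * (‖x1 - x2‖ + ‖y1 - y2‖))
    (x m : EuclideanSpace ℝ (Fin d1)) (y n : EuclideanSpace ℝ (Fin d2)) (α β : ℝ)
    (hα : 0 < α) (hβ : 0 < β) :
    g (x - α • m) (y + β • n) ≥
      g x y + β / 2 * ‖grady g (x - α • m) y‖ ^ 2 - α / 2 * ‖gradx g x y‖ ^ 2 -
        β / 2 * ‖grady g (x - α • m) y - n‖ ^ 2 + α / 2 * ‖gradx g x y - m‖ ^ 2 +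
        β / 2 * (1 - lb * β) * ‖n‖ ^ 2 - α / 2 * (1 + α * lb) * ‖m‖ ^ 2 :=
  alternating_step_inequality_general g lb hdiff hlipx hlipy x m y n α β
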